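/- arXiv:1706.05267 — 3 statements merged into one kernel-verified Lean document; each statement's English description precedes it below -/
import Mathlib

section
/- Given two sequences of pairwise disjoint sets (ms_i^ℓ) and (ms_j^ℓ) satisfying the MS-Ordering property, the prefix unions MS_i^x = ms_i^1 ∪ … ∪ ms_i^x and MS_j^y = ms_j^1 ∪ … ∪ ms_j^y satisfy Containment: for all x, y, either MS_i^x ⊆ MS_j^y or MS_j^y ⊆ MS_i^x, provided both processes deliver the same total set of messages. -/
/-- Containment property of prefix unions of delivered message sets, under MS-Ordering. -/
theorem containment_of_ms_ordering {M : Type*} [DecidableEq M] {p q : ℕ}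
    (msi : Fin p → Finset M) (msj : Fin q → Finset M)
    (hdisji : ∀ k k' : Fin p, k ≠ k' → Disjoint (msi k) (msi k'))
    (hdisjj : ∀ l l' : Fin q, l ≠ l' → Disjoint (msj l) (msj l'))
    (hMS : ∀ (m m' : M) (k k' : Fin p) (l l' : Fin q),
      m ∈ msi k → m' ∈ msi k' → k < k' →
      m' ∈ msj l → m ∈ msj l' → ¬ l < l')
    (htotal : Finset.univ.biUnion msi = Finset.univ.biUnion msj) :
    ∀ x y : ℕ,
      (Finset.univ.filter (fun k : Fin p => (k : ℕ) < x)).biUnion msi ⊆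
        (Finset.univ.filter (fun l : Fin q => (l : ℕ) < y)).biUnion msj ∨
      (Finset.univ.filter (fun l : Fin q => (l : ℕ) < y)).biUnion msj ⊆
        (Finset.univ.filter (fun k : Fin p => (k : ℕ) < x)).biUnion msi := by
  intro x y
  by_contra h
  push_neg at h
  obtain ⟨h1, h2⟩ := h
  obtain ⟨m, hm, hmn⟩ := Finset.not_subset.mp h1
  obtain ⟨m', hm', hmn'⟩ := Finset.not_subset.mp h2
  simp only [Finset.mem_biUnion, Finset.mem_filter, Finset.mem_univ, true_and,
    not_exists, not_and] at hm hmn hm' hmn'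
  obtain ⟨k, hkx, hmk⟩ := hm
  obtain ⟨l, hly, hml⟩ := hm'
  -- m ∈ total union, so m ∈ some msj l'
  have hmtot : m ∈ Finset.univ.biUnion msj := by
    rw [← htotal]; exact Finset.mem_biUnion.mpr ⟨k, Finset.mem_univ _, hmk⟩
  obtain ⟨l', -, hml'⟩ := Finset.mem_biUnion.mp hmtot
  have hm'tot : m' ∈ Finset.univ.biUnion msi := by
    rw [htotal]; exact Finset.mem_biUnion.mpr ⟨l, Finset.mem_univ _, hml⟩
  obtain ⟨k', -, hm'k'⟩ := Finset.mem_biUnion.mp hm'tot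
  have hkk' : k < k' := by
    rw [Fin.lt_def]
    exact lt_of_lt_of_le hkx (le_of_not_gt (fun h => hmn' k' h hm'k'))
  have hll' : l < l' := by
    rw [Fin.lt_def]
    exact lt_of_lt_of_le hly (le_of_not_gt (fun h => hmn l' h hml'))
  exact hMS m m' k k' l l' hmk hm'k' hkk' hml hml' hll'
end

section
/- Let each process i have a strict partial order ↦ᵢ on messages induced by its sequence of delivered disjoint message sets (m ↦ᵢ m' iff the set containing m is delivered strictly before the set containing m'). If the family satisfies MS-Ordering, then the union ↦ = ⋃ᵢ ↦ᵢ is acyclic, and hence there exists a strict total order on the set of all messages extending ↦. -/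
/-!
MS-Ordering says that once some process delivers `m` strictly before `m'`, no process delivers
`m'` strictly before `m`; so every process delivers `m` no later than `m'`, and the total position
`∑ i, pos i m` strictly increases along each edge of the union order. A relation whose edges
strictly increase a potential has no cycles, and ordering messages by potential, with ties broken
by any well-order, is a strict total order extending it.
-/

open Relation

theorem Relation.not_transGen_self_of_map_lt {α β : Type*} [Preorder β] {r : α → α → Prop}
    (f : α → β) (hf : ∀ a b, r a b → f a < f b) (a : α) : ¬ TransGen r a a := fun h =>
  lt_irrefl (f a) <| by simpa only [transGen_eq_self] using TransGen.lift f hf a a h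

theorem exists_isStrictTotalOrder_forall_lt_of_lt {α β : Type*} [LinearOrder β] (f : α → β) :
    ∃ lt : α → α → Prop, IsStrictTotalOrder α lt ∧ ∀ a b, f a < f b → lt a b :=
  ⟨MonovaryOrder f f, inferInstance, fun _ _ h => Prod.Lex.left _ _ h⟩

theorem Finset.sum_lt_sum_of_msOrdering {ι M β : Type*} [Fintype ι] [AddCommMonoid β]
    [LinearOrder β] [IsOrderedCancelAddMonoid β] {pos : ι → M → β}
    (hMS : ∀ (i j : ι) (m m' : M), ¬ (pos i m < pos i m' ∧ pos j m' < pos j m))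
    {i : ι} {m m' : M} (h : pos i m < pos i m') : ∑ j, pos j m < ∑ j, pos j m' :=
  Finset.sum_lt_sum (fun j _ => not_lt.1 fun hj => hMS i j m m' ⟨h, hj⟩) ⟨i, mem_univ i, h⟩

theorem union_delivery_order_acyclic_and_extendible_general {M : Type*}
    (n : ℕ) (pos : Fin n → M → ℕ)
    (hMS : ∀ (i j : Fin n) (m m' : M), ¬ (pos i m < pos i m' ∧ pos j m' < pos j m)) :
    (∀ m : M, ¬ Relation.TransGen (fun m m' => ∃ i, pos i m < pos i m') m m) ∧
    ∃ lt : M → M → Prop, IsStrictTotalOrder M lt ∧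
      ∀ (i : Fin n) (m m' : M), pos i m < pos i m' → lt m m' := by
  have hsum : ∀ m m', (∃ i, pos i m < pos i m') → ∑ i, pos i m < ∑ i, pos i m' :=
    fun _ _ ⟨_, h⟩ => Finset.sum_lt_sum_of_msOrdering hMS h
  obtain ⟨lt, hlt, hext⟩ := exists_isStrictTotalOrder_forall_lt_of_lt fun m => ∑ i, pos i m
  exact ⟨not_transGen_self_of_map_lt _ hsum, lt, hlt,
    fun i m m' h => hext m m' (hsum m m' ⟨i, h⟩)⟩

/-- The union of the local delivery orders is acyclic and extends to a strict total
order on the messages. Each process `i` delivers the set containing message `m` at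
position `pos i m`; `m ↦ᵢ m'` iff `pos i m < pos i m'`. -/
theorem union_delivery_order_acyclic_and_extendible {M : Type*} [Fintype M]
    (n : ℕ) (pos : Fin n → M → ℕ)
    (hMS : ∀ (i j : Fin n) (m m' : M), ¬ (pos i m < pos i m' ∧ pos j m' < pos j m)) :
    (∀ m : M, ¬ Relation.TransGen (fun m m' => ∃ i, pos i m < pos i m') m m) ∧
    ∃ lt : M → M → Prop, IsStrictTotalOrder M lt ∧
      ∀ (i : Fin n) (m m' : M), pos i m < pos i m' → lt m m' :=
  union_delivery_order_acyclic_and_extendible_general n pos hMS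
end

section
/- If the MS-Ordering property holds and every process delivers each message in exactly one set (delivering sets one element at a time), then the delivery order is a total order broadcast restricted case: when all delivered sets are singletons, all processes deliver all messages in the same sequence order up to the prefix relation. -/
/-!
Two delivery sequences without an inversion differ by a strictly monotone permutation of the
positions `Fin (card M)`, and the only order automorphism of a well-order is the identity.
-/

theorem Equiv.eq_of_lt_imp_lt {α β : Type*} [LinearOrder β] [WellFoundedLT β] {e₁ e₂ : α ≃ β}
    (h : ∀ a b, e₁ a < e₁ b → e₂ a < e₂ b) : e₁ = e₂ := by
  have hmono : StrictMono (e₁.symm.trans e₂) := fun x y hxy => by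
    simpa using h (e₁.symm x) (e₁.symm y) (by simpa using hxy)
  let f : β ≃o β := hmono.orderIsoOfSurjective _ (e₁.symm.trans e₂).surjective
  have hf : f = OrderIso.refl β := Subsingleton.elim _ _
  ext a
  simpa [f] using (congr($hf (e₁ a))).symm

theorem lt_imp_lt_of_forall_not_inversion {α β γ : Type*} [LinearOrder β] [LinearOrder γ]
    {f : α → β} {g : α → γ} (hf : Function.Injective f) (hg : Function.Injective g)
    (h : ∀ a b, ¬ (f a < f b ∧ g b < g a)) (a b : α) (hab : f a < f b) : g a < g b :=
  lt_of_le_of_ne (not_lt.1 fun hba => h a b ⟨hab, hba⟩) (hg.ne (hf.ne_iff.1 hab.ne))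

theorem singleton_deliveries_total_order_general {M : Type*} [Fintype M]
    (n : ℕ) (e : Fin n → (M ≃ Fin (Fintype.card M)))
    (hMS : ∀ (i j : Fin n) (m m' : M), ¬ (e i m < e i m' ∧ e j m' < e j m)) :
    ∀ i j : Fin n, e i = e j := fun i j =>
  Equiv.eq_of_lt_imp_lt <|
    lt_imp_lt_of_forall_not_inversion (e i).injective (e j).injective (hMS i j)

/-- When all delivered sets are singletons, MS-Ordering forces all processes to
deliver all messages in the same order: the delivery permutations coincide. -/
theorem singleton_deliveries_total_order {M : Type*} [Fintype M] [DecidableEq M]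
    (n : ℕ) (e : Fin n → (M ≃ Fin (Fintype.card M)))
    (hMS : ∀ (i j : Fin n) (m m' : M), ¬ (e i m < e i m' ∧ e j m' < e j m)) :
    ∀ i j : Fin n, e i = e j :=
  singleton_deliveries_total_order_general n e hMS
end
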